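/- arXiv:2311.16544 — 6 statements merged into one kernel-verified Lean document; each statement's English description precedes it below -/
import Mathlib

section
/- Let G be a compact Hausdorff topological group with normalized Haar probability measure dg, let h : ℝ → ℝ be continuous, let σ : G → U(d_σ) be a continuous unitary representation, let ‖·‖ be a unitarily invariant norm on d_σ×d_σ complex matrices, and let ρ : G → U(d_ρ) be a continuous unitary representation with trivial commutant (every d_ρ×d_ρ complex matrix A satisfying Aρ(g) = ρ(g)A for all g ∈ G is a scalar multiple of the identity). Then for every g' ∈ G, the matrix-valued integral ∫_G h(‖σ(g) − σ(g')‖) ρ(g) dg equals K^ρ · ρ(g'), where K^ρ is the complex scalar K^ρ = (1/d_ρ) ∫_G h(‖σ(g) − I_{d_σ}‖) Tr[ρ(g)] dg. -/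
open MeasureTheory Matrix

/-- For a compact Hausdorff group `G` with normalized Haar probability measure `μ`,
a continuous `h : ℝ → ℝ`, a continuous unitary representation `σ`, a unitarily invariant norm
`Mnorm` on `dσ × dσ` complex matrices, and a continuous unitary representation `ρ` with trivial
commutant, the matrix integral `∫ h(‖σ(g) - σ(g')‖) ρ(g) dg` equals `K • ρ(g')` with
`K = (1/dρ) ∫ h(‖σ(g) - I‖) Tr ρ(g) dg`. -/
theorem stmt0 {G : Type*} [Group G] [TopologicalSpace G] [IsTopologicalGroup G]
    [CompactSpace G] [T2Space G] [MeasurableSpace G] [BorelSpace G]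
    (μ : Measure G) [μ.IsHaarMeasure] [IsProbabilityMeasure μ]
    {dσ dρ : ℕ}
    (h : ℝ → ℝ) (hh : Continuous h)
    (σ : G →* Matrix.unitaryGroup (Fin dσ) ℂ)
    (hσ : Continuous fun g : G => (σ g : Matrix (Fin dσ) (Fin dσ) ℂ))
    (Mnorm : Matrix (Fin dσ) (Fin dσ) ℂ → ℝ)
    (hMnorm_eq_zero : ∀ X, Mnorm X = 0 ↔ X = 0)
    (hMnorm_add : ∀ X Y, Mnorm (X + Y) ≤ Mnorm X + Mnorm Y)
    (hMnorm_smul : ∀ (c : ℂ) (X), Mnorm (c • X) = ‖c‖ * Mnorm X)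
    (hMnorm_inv : ∀ (U V : Matrix.unitaryGroup (Fin dσ) ℂ) (X : Matrix (Fin dσ) (Fin dσ) ℂ),
      Mnorm ((U : Matrix (Fin dσ) (Fin dσ) ℂ) * X * (V : Matrix (Fin dσ) (Fin dσ) ℂ)) = Mnorm X)
    (ρ : G →* Matrix.unitaryGroup (Fin dρ) ℂ)
    (hρ : Continuous fun g : G => (ρ g : Matrix (Fin dρ) (Fin dρ) ℂ))
    (hcommutant : ∀ A : Matrix (Fin dρ) (Fin dρ) ℂ,
      (∀ g : G, A * (ρ g : Matrix (Fin dρ) (Fin dρ) ℂ) = (ρ g : Matrix (Fin dρ) (Fin dρ) ℂ) * A) →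
      ∃ c : ℂ, A = c • (1 : Matrix (Fin dρ) (Fin dρ) ℂ)) :
    ∀ g' : G,
      (Matrix.of fun i j : Fin dρ =>
          ∫ g, (↑(h (Mnorm ((σ g : Matrix (Fin dσ) (Fin dσ) ℂ)
              - (σ g' : Matrix (Fin dσ) (Fin dσ) ℂ)))) : ℂ)
            * (ρ g : Matrix (Fin dρ) (Fin dρ) ℂ) i j ∂μ)
        =
      ((1 / (dρ : ℂ)) * ∫ g, (↑(h (Mnorm ((σ g : Matrix (Fin dσ) (Fin dσ) ℂ) - 1))) : ℂ)
            * (ρ g : Matrix (Fin dρ) (Fin dρ) ℂ).trace ∂μ)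
        • (ρ g' : Matrix (Fin dρ) (Fin dρ) ℂ) := by
  -- right invariance of μ
  have hRI : μ.IsMulRightInvariant := by
    constructor
    intro g
    have : IsProbabilityMeasure (Measure.map (· * g) μ) :=
      Measure.isProbabilityMeasure_map (measurable_mul_const g).aemeasurable
    exact Measure.isHaarMeasure_eq_of_isProbabilityMeasure _ μ
  -- basic facts about Mnorm
  have hM0 : Mnorm 0 = 0 := (hMnorm_eq_zero 0).2 rfl
  have habs : ∀ X Y : Matrix (Fin dσ) (Fin dσ) ℂ, |Mnorm X - Mnorm Y| ≤ Mnorm (X - Y) := by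
    intro X Y
    have hneg : ∀ Z : Matrix (Fin dσ) (Fin dσ) ℂ, Mnorm (-Z) = Mnorm Z := by
      intro Z
      have := hMnorm_smul (-1) Z
      simpa using this
    rw [abs_sub_le_iff]
    constructor
    · have := hMnorm_add (X - Y) Y
      rw [sub_add_cancel] at this
      linarith
    · have := hMnorm_add (Y - X) X
      rw [sub_add_cancel] at this
      have h2 : Mnorm (Y - X) = Mnorm (X - Y) := by
        rw [← hneg (X - Y), neg_sub]
      linarith
  have hbound : ∀ Z : Matrix (Fin dσ) (Fin dσ) ℂ,
      Mnorm Z ≤ ∑ i, ∑ j, ‖Z i j‖ * Mnorm (single i j (1 : ℂ)) := by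
    intro Z
    calc Mnorm Z = Mnorm (∑ i, ∑ j, single i j (Z i j)) := by
          rw [← matrix_eq_sum_single Z]
      _ ≤ ∑ i, Mnorm (∑ j, single i j (Z i j)) :=
          Finset.le_sum_of_subadditive Mnorm hM0.le hMnorm_add _ _
      _ ≤ ∑ i, ∑ j, Mnorm (single i j (Z i j)) :=
          Finset.sum_le_sum fun i _ => Finset.le_sum_of_subadditive Mnorm hM0.le hMnorm_add _ _
      _ = ∑ i, ∑ j, ‖Z i j‖ * Mnorm (single i j (1 : ℂ)) := by
          refine Finset.sum_congr rfl fun i _ => Finset.sum_congr rfl fun j _ => ?_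
          rw [show single i j (Z i j) = Z i j • single i j (1 : ℂ) by
            rw [smul_single, smul_eq_mul, mul_one], hMnorm_smul]
  -- continuity of Mnorm
  have hMcont : Continuous Mnorm := by
    rw [continuous_iff_continuousAt]
    intro Y
    have hucont : Continuous fun X : Matrix (Fin dσ) (Fin dσ) ℂ =>
        ∑ i, ∑ j, ‖X i j - Y i j‖ * Mnorm (single i j (1 : ℂ)) := by
      refine continuous_finset_sum _ fun i _ => continuous_finset_sum _ fun j _ => ?_
      exact (((continuous_id.matrix_elem i j).sub continuous_const).norm).mul
        continuous_const
    have hu0 : Filter.Tendsto (fun X : Matrix (Fin dσ) (Fin dσ) ℂ =>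
        ∑ i, ∑ j, ‖X i j - Y i j‖ * Mnorm (single i j (1 : ℂ))) (nhds Y) (nhds 0) := by
      have := hucont.tendsto Y
      simpa using this
    rw [ContinuousAt, tendsto_iff_dist_tendsto_zero]
    refine squeeze_zero (fun X => dist_nonneg) (fun X => ?_) hu0
    calc dist (Mnorm X) (Mnorm Y) = |Mnorm X - Mnorm Y| := Real.dist_eq _ _
      _ ≤ Mnorm (X - Y) := habs _ _
      _ ≤ ∑ i, ∑ j, ‖(X - Y) i j‖ * Mnorm (single i j (1 : ℂ)) := hbound _
      _ = ∑ i, ∑ j, ‖X i j - Y i j‖ * Mnorm (single i j (1 : ℂ)) := rfl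
  -- the basic function and matrix
  set f0 : G → ℂ := fun g => ((h (Mnorm ((σ g : Matrix (Fin dσ) (Fin dσ) ℂ) - 1))) : ℂ) with hf0def
  have hf0cont : Continuous f0 :=
    Complex.continuous_ofReal.comp (hh.comp (hMcont.comp (hσ.sub continuous_const)))
  set A : Matrix (Fin dρ) (Fin dρ) ℂ :=
    Matrix.of (fun k j => ∫ g, f0 g * (ρ g : Matrix (Fin dρ) (Fin dρ) ℂ) k j ∂μ) with hAdef
  have hint : ∀ k j : Fin dρ,
      Integrable (fun g => f0 g * (ρ g : Matrix (Fin dρ) (Fin dρ) ℂ) k j) μ := by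
    intro k j
    exact (hf0cont.mul (((continuous_apply j).comp (continuous_apply k)).comp hρ)
      ).integrable_of_hasCompactSupport (HasCompactSupport.of_compactSpace _)
  -- norm identities
  have hnl : ∀ g' g : G,
      Mnorm ((σ (g' * g) : Matrix (Fin dσ) (Fin dσ) ℂ) - (σ g' : Matrix (Fin dσ) (Fin dσ) ℂ))
        = Mnorm ((σ g : Matrix (Fin dσ) (Fin dσ) ℂ) - 1) := by
    intro g' g
    have e : (σ (g' * g) : Matrix (Fin dσ) (Fin dσ) ℂ) - (σ g' : Matrix (Fin dσ) (Fin dσ) ℂ)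
        = (σ g' : Matrix (Fin dσ) (Fin dσ) ℂ) * ((σ g : Matrix (Fin dσ) (Fin dσ) ℂ) - 1)
          * ((1 : Matrix.unitaryGroup (Fin dσ) ℂ) : Matrix (Fin dσ) (Fin dσ) ℂ) := by
      simp [_root_.map_mul, Matrix.mul_sub, Matrix.mul_one]
    rw [e, hMnorm_inv]
  have hnr : ∀ g' g : G,
      Mnorm ((σ (g * g') : Matrix (Fin dσ) (Fin dσ) ℂ) - (σ g' : Matrix (Fin dσ) (Fin dσ) ℂ))
        = Mnorm ((σ g : Matrix (Fin dσ) (Fin dσ) ℂ) - 1) := by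
    intro g' g
    have e : (σ (g * g') : Matrix (Fin dσ) (Fin dσ) ℂ) - (σ g' : Matrix (Fin dσ) (Fin dσ) ℂ)
        = ((1 : Matrix.unitaryGroup (Fin dσ) ℂ) : Matrix (Fin dσ) (Fin dσ) ℂ)
          * ((σ g : Matrix (Fin dσ) (Fin dσ) ℂ) - 1)
          * (σ g' : Matrix (Fin dσ) (Fin dσ) ℂ) := by
      simp [_root_.map_mul, Matrix.sub_mul, Matrix.one_mul]
    rw [e, hMnorm_inv]
  -- left: M g' = ρ g' * A
  have hLeft : ∀ g' : G,
      (Matrix.of fun i j : Fin dρ =>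
          ∫ g, (↑(h (Mnorm ((σ g : Matrix (Fin dσ) (Fin dσ) ℂ)
              - (σ g' : Matrix (Fin dσ) (Fin dσ) ℂ)))) : ℂ)
            * (ρ g : Matrix (Fin dρ) (Fin dρ) ℂ) i j ∂μ)
        = (ρ g' : Matrix (Fin dρ) (Fin dρ) ℂ) * A := by
    intro g'
    ext i j
    rw [Matrix.mul_apply]
    show (∫ g, (↑(h (Mnorm ((σ g : Matrix (Fin dσ) (Fin dσ) ℂ)
              - (σ g' : Matrix (Fin dσ) (Fin dσ) ℂ)))) : ℂ)
            * (ρ g : Matrix (Fin dρ) (Fin dρ) ℂ) i j ∂μ) = _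
    rw [← integral_mul_left_eq_self (fun g => (↑(h (Mnorm ((σ g : Matrix (Fin dσ) (Fin dσ) ℂ)
              - (σ g' : Matrix (Fin dσ) (Fin dσ) ℂ)))) : ℂ)
            * (ρ g : Matrix (Fin dρ) (Fin dρ) ℂ) i j) g']
    have step : ∀ g : G, (↑(h (Mnorm ((σ (g' * g) : Matrix (Fin dσ) (Fin dσ) ℂ)
              - (σ g' : Matrix (Fin dσ) (Fin dσ) ℂ)))) : ℂ)
            * (ρ (g' * g) : Matrix (Fin dρ) (Fin dρ) ℂ) i j
        = ∑ k, (ρ g' : Matrix (Fin dρ) (Fin dρ) ℂ) i k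
            * (f0 g * (ρ g : Matrix (Fin dρ) (Fin dρ) ℂ) k j) := by
      intro g
      rw [hnl g' g]
      have e2 : (ρ (g' * g) : Matrix (Fin dρ) (Fin dρ) ℂ)
          = (ρ g' : Matrix (Fin dρ) (Fin dρ) ℂ) * (ρ g : Matrix (Fin dρ) (Fin dρ) ℂ) := by
        simp [_root_.map_mul]
      rw [e2, Matrix.mul_apply, Finset.mul_sum]
      exact Finset.sum_congr rfl fun k _ => by ring
    simp_rw [step]
    rw [integral_finset_sum _ (fun k _ => (hint k j).const_mul _)]
    exact Finset.sum_congr rfl fun k _ => integral_const_mul _ _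
  -- right: M g' = A * ρ g'
  have hRight : ∀ g' : G,
      (Matrix.of fun i j : Fin dρ =>
          ∫ g, (↑(h (Mnorm ((σ g : Matrix (Fin dσ) (Fin dσ) ℂ)
              - (σ g' : Matrix (Fin dσ) (Fin dσ) ℂ)))) : ℂ)
            * (ρ g : Matrix (Fin dρ) (Fin dρ) ℂ) i j ∂μ)
        = A * (ρ g' : Matrix (Fin dρ) (Fin dρ) ℂ) := by
    intro g'
    ext i j
    rw [Matrix.mul_apply]
    show (∫ g, (↑(h (Mnorm ((σ g : Matrix (Fin dσ) (Fin dσ) ℂ)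
              - (σ g' : Matrix (Fin dσ) (Fin dσ) ℂ)))) : ℂ)
            * (ρ g : Matrix (Fin dρ) (Fin dρ) ℂ) i j ∂μ) = _
    rw [← integral_mul_right_eq_self (fun g => (↑(h (Mnorm ((σ g : Matrix (Fin dσ) (Fin dσ) ℂ)
              - (σ g' : Matrix (Fin dσ) (Fin dσ) ℂ)))) : ℂ)
            * (ρ g : Matrix (Fin dρ) (Fin dρ) ℂ) i j) g']
    have step : ∀ g : G, (↑(h (Mnorm ((σ (g * g') : Matrix (Fin dσ) (Fin dσ) ℂ)
              - (σ g' : Matrix (Fin dσ) (Fin dσ) ℂ)))) : ℂ)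
            * (ρ (g * g') : Matrix (Fin dρ) (Fin dρ) ℂ) i j
        = ∑ k, (f0 g * (ρ g : Matrix (Fin dρ) (Fin dρ) ℂ) i k)
            * (ρ g' : Matrix (Fin dρ) (Fin dρ) ℂ) k j := by
      intro g
      rw [hnr g' g]
      have e2 : (ρ (g * g') : Matrix (Fin dρ) (Fin dρ) ℂ)
          = (ρ g : Matrix (Fin dρ) (Fin dρ) ℂ) * (ρ g' : Matrix (Fin dρ) (Fin dρ) ℂ) := by
        simp [_root_.map_mul]
      rw [e2, Matrix.mul_apply, Finset.mul_sum]
      exact Finset.sum_congr rfl fun k _ => by ring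
    simp_rw [step]
    rw [integral_finset_sum _ (fun k _ => (hint i k).mul_const _)]
    exact Finset.sum_congr rfl fun k _ => integral_mul_const _ _
  -- A is in the commutant
  obtain ⟨c, hc⟩ := hcommutant A (fun g => by rw [← hRight g, hLeft g])
  intro g'
  rw [hLeft g', hc]
  rcases Nat.eq_zero_or_pos dρ with hd | hd
  · subst hd
    ext i j
    exact i.elim0
  · have hKc : ((1 / (dρ : ℂ)) * ∫ g, (↑(h (Mnorm ((σ g : Matrix (Fin dσ) (Fin dσ) ℂ) - 1))) : ℂ)
            * (ρ g : Matrix (Fin dρ) (Fin dρ) ℂ).trace ∂μ) = c := by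
      have e1 : (∫ g, (↑(h (Mnorm ((σ g : Matrix (Fin dσ) (Fin dσ) ℂ) - 1))) : ℂ)
            * (ρ g : Matrix (Fin dρ) (Fin dρ) ℂ).trace ∂μ)
          = ∑ k, ∫ g, f0 g * (ρ g : Matrix (Fin dρ) (Fin dρ) ℂ) k k ∂μ := by
        rw [← integral_finset_sum _ (fun k _ => hint k k)]
        refine integral_congr_ae (Filter.Eventually.of_forall fun g => ?_)
        simp [Matrix.trace, Matrix.diag, Finset.mul_sum, hf0def]
      have e2 : ∑ k, ∫ g, f0 g * (ρ g : Matrix (Fin dρ) (Fin dρ) ℂ) k k ∂μ = A.trace := by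
        rw [hAdef]; rfl
      rw [e1, e2, hc, Matrix.trace_smul, Matrix.trace_one]
      have hdρ : (dρ : ℂ) ≠ 0 := Nat.cast_ne_zero.2 hd.ne'
      field_simp
      rw [Fintype.card_fin, smul_eq_mul, mul_comm]
    rw [hKc]
    rw [Matrix.mul_smul, Matrix.mul_one]
end

section
/- Let G be a group and let ρ : G → U(d) be a unitary representation with trivial commutant (every d×d complex matrix M satisfying Mρ(g) = ρ(g)M for all g ∈ G is a scalar multiple of the identity). Let N ≥ 1 and let L be an Nd×Nd Hermitian complex matrix that commutes with I_N ⊗ ρ(g) for every g ∈ G. Then L has a d-fold degenerate eigenvalue spectrum: there exists an N×N Hermitian matrix Φ such that the characteristic polynomial of L equals the d-th power of the characteristic polynomial of Φ; consequently the algebraic multiplicity of every eigenvalue of L is divisible by d. -/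
open Matrix Kronecker Polynomial

private lemma rootMultiplicity_pow_aux {p : ℂ[X]} (hp : p ≠ 0) (μ : ℂ) (d : ℕ) :
    (p ^ d).rootMultiplicity μ = d * p.rootMultiplicity μ := by
  induction d with
  | zero => simp [Polynomial.rootMultiplicity_eq_zero (by simp [Polynomial.IsRoot] : ¬(1 : ℂ[X]).IsRoot μ)]
  | succ n ih =>
      rw [pow_succ, Polynomial.rootMultiplicity_mul (mul_ne_zero (pow_ne_zero _ hp) hp), ih]
      ring

/-- If `ρ : G → U(d)` is a unitary representation with trivial commutant and `L`
is an `Nd × Nd` Hermitian matrix commuting with `I_N ⊗ ρ(g)` for all `g`, then `L` has a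
`d`-fold degenerate spectrum: its characteristic polynomial is the `d`-th power of that of an
`N × N` Hermitian matrix `Φ`, and every eigenvalue of `L` has algebraic multiplicity divisible
by `d`. -/
theorem stmt6 {G : Type*} [Group G] {d N : ℕ}
    (ρ : G →* Matrix.unitaryGroup (Fin d) ℂ)
    (hcommutant : ∀ M : Matrix (Fin d) (Fin d) ℂ,
      (∀ g : G, M * (ρ g : Matrix (Fin d) (Fin d) ℂ) = (ρ g : Matrix (Fin d) (Fin d) ℂ) * M) →
      ∃ c : ℂ, M = c • (1 : Matrix (Fin d) (Fin d) ℂ))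
    (hN : 1 ≤ N)
    (L : Matrix (Fin N × Fin d) (Fin N × Fin d) ℂ)
    (hL : L.IsHermitian)
    (hLcomm : ∀ g : G,
      L * ((1 : Matrix (Fin N) (Fin N) ℂ) ⊗ₖ (ρ g : Matrix (Fin d) (Fin d) ℂ)) =
      ((1 : Matrix (Fin N) (Fin N) ℂ) ⊗ₖ (ρ g : Matrix (Fin d) (Fin d) ℂ)) * L) :
    ∃ Φ : Matrix (Fin N) (Fin N) ℂ,
      Φ.IsHermitian ∧ L.charpoly = Φ.charpoly ^ d ∧
      ∀ μ : ℂ, d ∣ L.charpoly.rootMultiplicity μ := by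
  rcases Nat.eq_zero_or_pos d with hd0 | hd
  · subst hd0
    have hcp : L.charpoly = 1 := by
      rw [Matrix.charpoly]
      exact Matrix.det_isEmpty
    refine ⟨0, Matrix.isHermitian_zero, by simp [hcp], ?_⟩
    intro μ
    rw [hcp, Polynomial.rootMultiplicity_eq_zero (by simp [Polynomial.IsRoot])]
  · set z : Fin d := ⟨0, hd⟩ with hz
    set Φ : Matrix (Fin N) (Fin N) ℂ := Matrix.of fun i j => L (i, z) (j, z) with hΦ
    -- each block is scalar
    have key : ∀ i j a b, L (i, a) (j, b) = Φ i j * (1 : Matrix (Fin d) (Fin d) ℂ) a b := by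
      intro i j a b
      obtain ⟨c, hc⟩ := hcommutant (Matrix.of fun a b => L (i, a) (j, b)) (by
        intro g
        ext a b
        have h := congrFun (congrFun (hLcomm g) (i, a)) (j, b)
        simp only [Matrix.mul_apply, Fintype.sum_prod_type, Matrix.kroneckerMap_apply,
          Matrix.one_apply] at h
        simp only [Matrix.mul_apply, Matrix.of_apply]
        simpa [mul_ite, ite_mul, Finset.sum_ite_eq, Finset.sum_ite_eq'] using h)
      have h1 := congrFun (congrFun hc a) b
      have h2 := congrFun (congrFun hc z) z
      simp only [Matrix.of_apply, Matrix.smul_apply, smul_eq_mul] at h1 h2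
      have hΦc : Φ i j = c := by
        rw [hΦ]; simp only [Matrix.of_apply]; rw [h2]; simp [Matrix.one_apply]
      rw [h1, hΦc]
    have hΦherm : Φ.IsHermitian := by
      ext i j
      simp only [Matrix.conjTranspose_apply, hΦ, Matrix.of_apply]
      exact hL.apply (i, z) (j, z)
    -- L = Φ ⊗ₖ 1
    have hLeq : L = Φ ⊗ₖ (1 : Matrix (Fin d) (Fin d) ℂ) := by
      ext ⟨i, a⟩ ⟨j, b⟩
      rw [Matrix.kroneckerMap_apply]
      exact key i j a b
    have hchar : L.charpoly = Φ.charpoly ^ d := by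
      have hcm : Matrix.charmatrix L =
          (Matrix.charmatrix Φ) ⊗ₖ (1 : Matrix (Fin d) (Fin d) ℂ[X]) := by
        ext ⟨i, a⟩ ⟨j, b⟩
        rw [Matrix.kroneckerMap_apply, Matrix.charmatrix_apply, hLeq,
          Matrix.charmatrix_apply]
        by_cases hab : a = b
        · subst hab
          by_cases hij : i = j
          · subst hij
            simp [Matrix.one_apply, Matrix.kroneckerMap_apply]
          · simp [Matrix.one_apply, hij, Matrix.kroneckerMap_apply, Prod.ext_iff]
        · simp [Matrix.one_apply, hab, Matrix.kroneckerMap_apply, Prod.ext_iff]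
      rw [Matrix.charpoly, hcm, Matrix.det_kronecker]
      simp [Matrix.charpoly]
    refine ⟨Φ, hΦherm, hchar, fun μ => ?_⟩
    rw [hchar, rootMultiplicity_pow_aux (Matrix.charpoly_monic Φ).ne_zero]
    exact Dvd.intro _ rfl
end

section
/- Let L be the noiseless ρ-Laplacian built from unitaries U_1, …, U_N ∈ U(d) and symmetric real weights K_{ij}, let L(W) be the associated N×N weight Laplacian, and let S be the Nd×Nd block-diagonal matrix S = diag(U_1, …, U_N). Then S⁻¹ L S = L(W) ⊗ I_d, i.e. conjugating the noiseless ρ-Laplacian by S yields the Kronecker product of the scalar weight Laplacian with the d×d identity. -/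
open Matrix Kronecker

/-- Conjugating the noiseless ρ-Laplacian `L` (built from unitaries `U i` and
symmetric real weights `K i j`) by the block-diagonal matrix `S = diag(U 1, …, U N)` yields
`L(W) ⊗ I_d`, the Kronecker product of the scalar weight Laplacian with the identity. -/
theorem stmt7 {N d : ℕ} (hN : 1 ≤ N) (hd : 1 ≤ d)
    (U : Fin N → Matrix.unitaryGroup (Fin d) ℂ)
    (K : Fin N → Fin N → ℝ) (hK : ∀ i j, K i j = K j i)
    (L : Matrix (Fin N × Fin d) (Fin N × Fin d) ℂ)
    (hL : L = Matrix.of fun p q : Fin N × Fin d =>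
      if p.1 = q.1 then
        (if p.2 = q.2 then ((∑ k ∈ Finset.univ.erase p.1, K p.1 k : ℝ) : ℂ) else 0)
      else
        (-(K p.1 q.1 : ℝ) : ℂ) *
          ((U p.1 : Matrix (Fin d) (Fin d) ℂ) * (U q.1 : Matrix (Fin d) (Fin d) ℂ)ᴴ) p.2 q.2)
    (LW : Matrix (Fin N) (Fin N) ℝ)
    (hLW : LW = Matrix.of fun i j : Fin N =>
      if i = j then ∑ k ∈ Finset.univ.erase i, K i k else -(K i j))
    (S : Matrix (Fin N × Fin d) (Fin N × Fin d) ℂ)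
    (hS : S = Matrix.of fun p q : Fin N × Fin d =>
      if p.1 = q.1 then (U p.1 : Matrix (Fin d) (Fin d) ℂ) p.2 q.2 else 0) :
    S⁻¹ * L * S = (LW.map (Complex.ofReal)) ⊗ₖ (1 : Matrix (Fin d) (Fin d) ℂ) := by
  have hU : ∀ i, (U i : Matrix (Fin d) (Fin d) ℂ)ᴴ * (U i : Matrix (Fin d) (Fin d) ℂ) = 1 := by
    intro i
    simpa [Matrix.star_eq_conjTranspose] using (U i).prop.1
  have hU' : ∀ i, (U i : Matrix (Fin d) (Fin d) ℂ) * (U i : Matrix (Fin d) (Fin d) ℂ)ᴴ = 1 := by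
    intro i
    simpa [Matrix.star_eq_conjTranspose] using (U i).prop.2
  have hunit : Sᴴ * S = 1 := by
    subst hS
    ext ⟨p1, p2⟩ ⟨q1, q2⟩
    simp only [Matrix.mul_apply, Matrix.conjTranspose_apply, Matrix.of_apply,
      Fintype.sum_prod_type, Matrix.one_apply]
    by_cases h : p1 = q1
    · subst h
      rw [Finset.sum_eq_single p1 (fun b _ hb => by simp [hb]) (by simp)]
      simp only [if_pos rfl]
      have := congrFun (congrFun (hU p1) p2) q2
      simp only [Matrix.mul_apply, Matrix.conjTranspose_apply, Matrix.one_apply] at this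
      simpa [Prod.ext_iff] using this
    · rw [if_neg (by simp [Prod.ext_iff, h])]
      apply Finset.sum_eq_zero
      intro i _
      apply Finset.sum_eq_zero
      intro t _
      rcases eq_or_ne i p1 with h1 | h1
      · subst h1
        simp [h]
      · simp [h1]
  have hdet : IsUnit S.det := Matrix.isUnit_det_of_left_inverse hunit
  have hcomm : L * S = S * ((LW.map (Complex.ofReal)) ⊗ₖ (1 : Matrix (Fin d) (Fin d) ℂ)) := by
    subst hL hS hLW
    ext ⟨p1, p2⟩ ⟨q1, q2⟩
    simp only [Matrix.mul_apply, Matrix.of_apply, Fintype.sum_prod_type,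
      Matrix.kroneckerMap_apply, Matrix.map_apply, Matrix.one_apply]
    -- LHS: sum over i, t of L (p1,p2) (i,t) * S (i,t) (q1,q2); S nonzero only i = q1
    rw [Finset.sum_eq_single q1 (fun b _ hb => Finset.sum_eq_zero fun t _ => by simp [hb]) (by simp),
        Finset.sum_eq_single p1 (fun b _ hb => Finset.sum_eq_zero fun t _ => by simp [Ne.symm hb]) (by simp)]
    rcases eq_or_ne p1 q1 with h | h
    · subst h
      simp only [if_pos rfl, ite_mul, zero_mul, mul_ite, mul_zero, mul_one,
        Finset.sum_ite_eq, Finset.sum_ite_eq', Finset.mem_univ, if_true]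
      ring
    · have key : ((U p1 : Matrix (Fin d) (Fin d) ℂ) * (U q1 : Matrix (Fin d) (Fin d) ℂ)ᴴ) *
          (U q1 : Matrix (Fin d) (Fin d) ℂ) = (U p1 : Matrix (Fin d) (Fin d) ℂ) := by
        rw [Matrix.mul_assoc, hU q1, Matrix.mul_one]
      have key2 := congrFun (congrFun key p2) q2
      simp only [Matrix.mul_apply] at key2
      simp only [if_neg h, ite_mul, zero_mul, mul_ite, mul_zero, mul_one, if_pos rfl,
        Finset.sum_ite_eq, Finset.sum_ite_eq', Finset.mem_univ, if_true]
      rw [← key2, Finset.sum_mul]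
      refine Finset.sum_congr rfl fun t _ => ?_
      push_cast
      ring
  have : S⁻¹ * L * S = (S⁻¹ * S) * ((LW.map (Complex.ofReal)) ⊗ₖ (1 : Matrix (Fin d) (Fin d) ℂ)) := by
    rw [Matrix.mul_assoc, hcomm, ← Matrix.mul_assoc]
  rw [this, Matrix.nonsing_inv_mul S hdet, Matrix.one_mul]
end

section
/- Let L be the noiseless ρ-Laplacian built from unitaries U_1, …, U_N ∈ U(d) and symmetric real weights K_{ij}, and let L(W) be the associated N×N weight Laplacian. Then the characteristic polynomial of L equals the d-th power of the characteristic polynomial of L(W); in particular the spectrum of L is the spectrum of L(W) with every multiplicity multiplied by d. -/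
open Matrix Kronecker Polynomial

section Aux

variable {n : Type*} [Fintype n] [DecidableEq n] {R : Type*} [CommRing R]

lemma charpoly_similar (P Q A : Matrix n n R) (hPQ : P * Q = 1) :
    (P * A * Q).charpoly = A.charpoly := by
  have hmap : ∀ (B C : Matrix n n R), (B * C).map (Polynomial.C : R →+* R[X]) =
      B.map Polynomial.C * C.map Polynomial.C := fun B C => by
    simpa using Matrix.map_mul (M := B) (N := C) (f := (Polynomial.C : R →+* R[X]))
  have key : charmatrix (P * A * Q) = P.map Polynomial.C * charmatrix A * Q.map Polynomial.C := by
    unfold charmatrix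
    have hs : ∀ (B : Matrix n n R[X]),
        B * Matrix.scalar n (Polynomial.X) = Matrix.scalar n (Polynomial.X) * B := fun B =>
      (Matrix.scalar_commute Polynomial.X (fun r' => Commute.all _ _) B).symm
    rw [mul_sub, sub_mul]
    congr 1
    · rw [hs, mul_assoc, ← hmap, hPQ]
      simp [Matrix.scalar_apply]
    · simp only [RingHom.mapMatrix_apply]
      rw [← hmap, ← hmap]
  have hdet : (P.map (Polynomial.C : R →+* R[X])).det * (Q.map Polynomial.C).det = 1 := by
    rw [← Matrix.det_mul, ← hmap, hPQ]
    simp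
  unfold Matrix.charpoly
  rw [key, Matrix.det_mul, Matrix.det_mul]
  calc (P.map Polynomial.C).det * (charmatrix A).det * (Q.map Polynomial.C).det
      = (charmatrix A).det * ((P.map Polynomial.C).det * (Q.map Polynomial.C).det) := by ring
    _ = (charmatrix A).det := by rw [hdet, mul_one]

lemma charmatrix_blockDiagonal {o : Type*} [Fintype o] [DecidableEq o]
    (M : o → Matrix n n R) :
    charmatrix (blockDiagonal M) = blockDiagonal (fun k => charmatrix (M k)) := by
  ext ⟨i, k⟩ ⟨j, k'⟩
  by_cases hk : k = k'
  · subst hk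
    by_cases hij : i = j
    · subst hij
      simp [charmatrix_apply_eq, blockDiagonal_apply, charmatrix_apply]
    · rw [charmatrix_apply_ne _ _ _ (by simp [hij])]
      simp [blockDiagonal_apply, charmatrix_apply_ne _ _ _ hij]
  · rw [charmatrix_apply_ne _ _ _ (by simp [hk])]
    simp [blockDiagonal_apply, hk]

lemma charpoly_blockDiagonal {o : Type*} [Fintype o] [DecidableEq o]
    (M : o → Matrix n n R) :
    (blockDiagonal M).charpoly = ∏ k, (M k).charpoly := by
  unfold Matrix.charpoly
  rw [charmatrix_blockDiagonal, Matrix.det_blockDiagonal]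

lemma rootMultiplicity_pow' {R : Type*} [CommRing R] [IsDomain R] {p : R[X]} (hp : p ≠ 0)
    (d : ℕ) (x : R) : (p ^ d).rootMultiplicity x = d * p.rootMultiplicity x := by
  induction d with
  | zero => simp
  | succ d ih =>
    rw [pow_succ, Polynomial.rootMultiplicity_mul (mul_ne_zero (pow_ne_zero d hp) hp), ih]
    ring

end Aux

/-- The characteristic polynomial of the noiseless ρ-Laplacian `L` equals the
`d`-th power of the characteristic polynomial of the weight Laplacian `L(W)`; in particular the
spectrum of `L` is the spectrum of `L(W)` with every multiplicity multiplied by `d`. -/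
theorem stmt8 {N d : ℕ} (hN : 1 ≤ N) (hd : 1 ≤ d)
    (U : Fin N → Matrix.unitaryGroup (Fin d) ℂ)
    (K : Fin N → Fin N → ℝ) (hK : ∀ i j, K i j = K j i)
    (L : Matrix (Fin N × Fin d) (Fin N × Fin d) ℂ)
    (hL : L = Matrix.of fun p q : Fin N × Fin d =>
      if p.1 = q.1 then
        (if p.2 = q.2 then ((∑ k ∈ Finset.univ.erase p.1, K p.1 k : ℝ) : ℂ) else 0)
      else
        (-(K p.1 q.1 : ℝ) : ℂ) *
          ((U p.1 : Matrix (Fin d) (Fin d) ℂ) * (U q.1 : Matrix (Fin d) (Fin d) ℂ)ᴴ) p.2 q.2)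
    (LW : Matrix (Fin N) (Fin N) ℝ)
    (hLW : LW = Matrix.of fun i j : Fin N =>
      if i = j then ∑ k ∈ Finset.univ.erase i, K i k else -(K i j)) :
    L.charpoly = ((LW.map (Complex.ofReal)).charpoly) ^ d ∧
    ∀ μ : ℂ, L.charpoly.rootMultiplicity μ =
      d * ((LW.map (Complex.ofReal)).charpoly.rootMultiplicity μ) := by
  classical
  set LWc : Matrix (Fin N) (Fin N) ℂ := LW.map Complex.ofReal with hLWc
  set D : Matrix (Fin N × Fin d) (Fin N × Fin d) ℂ :=
    Matrix.of (fun p q : Fin N × Fin d =>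
      if p.1 = q.1 then (U p.1 : Matrix (Fin d) (Fin d) ℂ) p.2 q.2 else 0) with hD
  set A : Matrix (Fin N × Fin d) (Fin N × Fin d) ℂ :=
    Matrix.blockDiagonal (fun _ : Fin d => LWc) with hA
  have hUU : ∀ i : Fin N,
      (U i : Matrix (Fin d) (Fin d) ℂ) * (U i : Matrix (Fin d) (Fin d) ℂ)ᴴ = 1 := by
    intro i
    have := (U i).prop
    rw [Matrix.mem_unitaryGroup_iff] at this
    simpa [Matrix.star_eq_conjTranspose] using this
  have hUUe : ∀ (i : Fin N) (a b : Fin d),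
      ∑ r : Fin d, (U i : Matrix (Fin d) (Fin d) ℂ) a r *
        star ((U i : Matrix (Fin d) (Fin d) ℂ) b r) = if a = b then 1 else 0 := by
    intro i a b
    have := congrArg (fun M : Matrix (Fin d) (Fin d) ℂ => M a b) (hUU i)
    simp only [Matrix.mul_apply, Matrix.conjTranspose_apply] at this
    rw [this, Matrix.one_apply]
  -- D * Dᴴ = 1
  have hDD : D * Dᴴ = 1 := by
    ext ⟨p1, p2⟩ ⟨q1, q2⟩
    simp only [Matrix.mul_apply, Matrix.conjTranspose_apply, hD, Matrix.of_apply]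
    rw [Fintype.sum_prod_type]
    by_cases hpq : p1 = q1
    · subst hpq
      rw [Finset.sum_eq_single p1
        (fun b _ hb => by
          apply Finset.sum_eq_zero; intro r2 _
          rw [if_neg (Ne.symm hb)]; simp)
        (by simp)]
      simp only [eq_self_iff_true, if_true]
      rw [hUUe p1 p2 q2]
      by_cases h2 : p2 = q2 <;> simp [Matrix.one_apply, Prod.ext_iff, h2]
    · rw [Finset.sum_eq_zero, eq_comm]
      · exact Matrix.one_apply_ne (by simp [Prod.ext_iff, hpq])
      · intro r1 _
        apply Finset.sum_eq_zero; intro r2 _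
        by_cases h1 : p1 = r1
        · have h2 : ¬ q1 = r1 := fun h => hpq (h1.trans h.symm)
          rw [if_neg h2]; simp
        · rw [if_neg h1]; simp
  -- D * A
  have hDA : ∀ p1 q1 p2 q2, (D * A) (p1, p2) (q1, q2) =
      (U p1 : Matrix (Fin d) (Fin d) ℂ) p2 q2 * LWc p1 q1 := by
    intro p1 q1 p2 q2
    simp only [Matrix.mul_apply, hD, hA, Matrix.of_apply, Matrix.blockDiagonal_apply]
    rw [Fintype.sum_prod_type]
    rw [Finset.sum_eq_single p1
      (fun b _ hb => by
        apply Finset.sum_eq_zero; intro r2 _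
        rw [if_neg (Ne.symm hb)]; simp)
      (by simp)]
    simp only [if_pos rfl]
    rw [Finset.sum_eq_single q2 (fun b _ hb => by rw [if_neg hb]; simp) (by simp)]
    simp
  -- L = D * A * Dᴴ
  have hLDA : L = D * A * Dᴴ := by
    ext ⟨p1, p2⟩ ⟨q1, q2⟩
    have hstep : (D * A * Dᴴ) (p1, p2) (q1, q2) =
        LWc p1 q1 * ((U p1 : Matrix (Fin d) (Fin d) ℂ) *
          (U q1 : Matrix (Fin d) (Fin d) ℂ)ᴴ) p2 q2 := by
      simp only [Matrix.mul_apply (M := D * A), Matrix.conjTranspose_apply]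
      rw [Fintype.sum_prod_type]
      rw [Finset.sum_eq_single q1
        (fun b _ hb => by
          apply Finset.sum_eq_zero; intro r2 _
          have : D (q1, q2) (b, r2) = 0 := by
            simp only [hD, Matrix.of_apply]
            exact if_neg (Ne.symm hb)
          rw [this]; simp)
        (by simp)]
      have hDq : ∀ r2, D (q1, q2) (q1, r2) =
          (U q1 : Matrix (Fin d) (Fin d) ℂ) q2 r2 := by
        intro r2; simp [hD]
      calc ∑ r2, (D * A) (p1, p2) (q1, r2) * star (D (q1, q2) (q1, r2))
          = ∑ r2, (U p1 : Matrix (Fin d) (Fin d) ℂ) p2 r2 * LWc p1 q1 *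
              star ((U q1 : Matrix (Fin d) (Fin d) ℂ) q2 r2) := by
            apply Finset.sum_congr rfl; intro r2 _
            rw [hDA, hDq]
        _ = LWc p1 q1 * ∑ r2, (U p1 : Matrix (Fin d) (Fin d) ℂ) p2 r2 *
              star ((U q1 : Matrix (Fin d) (Fin d) ℂ) q2 r2) := by
            rw [Finset.mul_sum]; apply Finset.sum_congr rfl; intro r2 _; ring
        _ = LWc p1 q1 * ((U p1 : Matrix (Fin d) (Fin d) ℂ) *
              (U q1 : Matrix (Fin d) (Fin d) ℂ)ᴴ) p2 q2 := by
            congr 1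
    rw [hstep, hL]
    have hLWe : ∀ i j : Fin N, LWc i j =
        ((if i = j then ∑ k ∈ Finset.univ.erase i, K i k else -(K i j) : ℝ) : ℂ) := by
      intro i j
      simp [hLWc, hLW]
    simp only [Matrix.of_apply]
    by_cases hpq : p1 = q1
    · subst hpq
      rw [hLWe, if_pos rfl, if_pos rfl, hUU p1]
      by_cases h2 : p2 = q2 <;> simp [Matrix.one_apply, h2]
    · simp [hLWe, hpq]
  have hmain : L.charpoly = LWc.charpoly ^ d := by
    rw [hLDA, charpoly_similar D Dᴴ A hDD, hA, charpoly_blockDiagonal]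
    simp
  refine ⟨hmain, fun μ => ?_⟩
  rw [hmain]
  exact rootMultiplicity_pow' (Matrix.charpoly_monic _).ne_zero d μ
end

section
/- Let L be the noiseless ρ-Laplacian built from unitaries U_1, …, U_N ∈ U(d) and symmetric real weights K_{ij} with all K_{ij} ≥ 0, and suppose the graph on vertices {1, …, N} with an edge between i and j whenever K_{ij} > 0 is connected. Then the kernel of L is exactly the d-dimensional subspace { v ∈ ℂ^{Nd} : there exists w ∈ ℂ^d with v_i = U_i w for all i }, where v_i denotes the i-th block of v of size d. -/
open Matrix Finset

lemma swapsum {M : Type*} [AddCommMonoid M] {n : ℕ} (f : Fin n → Fin n → M) :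
    ∑ i, ∑ j ∈ univ.erase i, f i j = ∑ i, ∑ j ∈ univ.erase i, f j i := by
  have h : ∀ g : Fin n → Fin n → M,
      ∑ i, ∑ j ∈ univ.erase i, g i j = ∑ i, ∑ j, if j = i then 0 else g i j := by
    intro g
    refine Finset.sum_congr rfl fun i _ => ?_
    rw [← Finset.sum_erase (univ) (f := fun j => if j = i then 0 else g i j) (if_pos rfl)]
    exact Finset.sum_congr rfl fun j hj => by
      rw [if_neg (Finset.ne_of_mem_erase hj)]
  rw [h, h, Finset.sum_comm]
  refine Finset.sum_congr rfl fun a _ => Finset.sum_congr rfl fun b _ => ?_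
  by_cases hab : a = b
  · subst hab; simp
  · rw [if_neg hab, if_neg (Ne.symm hab)]

lemma hLv_aux {N d : ℕ}
    (U : Fin N → Matrix.unitaryGroup (Fin d) ℂ)
    (K : Fin N → Fin N → ℝ)
    (L : Matrix (Fin N × Fin d) (Fin N × Fin d) ℂ)
    (hL : L = Matrix.of fun p q : Fin N × Fin d =>
      if p.1 = q.1 then
        (if p.2 = q.2 then ((∑ k ∈ Finset.univ.erase p.1, K p.1 k : ℝ) : ℂ) else 0)
      else
        (-(K p.1 q.1 : ℝ) : ℂ) *
          ((U p.1 : Matrix (Fin d) (Fin d) ℂ) * (U q.1 : Matrix (Fin d) (Fin d) ℂ)ᴴ) p.2 q.2)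
    (v : Fin N × Fin d → ℂ) (i : Fin N) (a : Fin d) :
    L.mulVec v (i, a) = (∑ k ∈ Finset.univ.erase i, (K i k : ℂ)) * v (i, a)
      - ∑ j ∈ Finset.univ.erase i, (K i j : ℂ) *
          ((U i : Matrix (Fin d) (Fin d) ℂ) * (U j : Matrix (Fin d) (Fin d) ℂ)ᴴ).mulVec
            (fun b => v (j, b)) a := by
  subst hL
  rw [Matrix.mulVec, dotProduct, Fintype.sum_prod_type]
  rw [show (∑ j, ∑ b, Matrix.of _ (i, a) (j, b) * v (j, b) : ℂ)
      = (∑ b, Matrix.of _ (i, a) ((i : Fin N), b) * v (i, b))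
        + ∑ j ∈ Finset.univ.erase i, ∑ b, Matrix.of _ (i, a) (j, b) * v (j, b)
    from (Finset.add_sum_erase Finset.univ _ (Finset.mem_univ i)).symm]
  rw [sub_eq_add_neg]
  congr 1
  · simp only [Matrix.of_apply, if_pos rfl, ite_mul, zero_mul, Finset.sum_ite_eq,
      Finset.mem_univ, if_true, Complex.ofReal_sum]
  · rw [← Finset.sum_neg_distrib]
    refine Finset.sum_congr rfl fun j hj => ?_
    have hij : i ≠ j := (Finset.ne_of_mem_erase hj).symm
    simp only [Matrix.of_apply, if_neg hij]
    rw [Matrix.mulVec, dotProduct, Finset.mul_sum, ← Finset.sum_neg_distrib]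
    refine Finset.sum_congr rfl fun b _ => by ring

/-- If all weights `K i j` are nonnegative and the graph with an edge between
`i ≠ j` whenever `K i j > 0` is connected, then the kernel of the noiseless ρ-Laplacian `L` is
exactly the `d`-dimensional subspace of vectors whose `i`-th block is `U i • w` for some fixed
`w ∈ ℂ^d`. -/
theorem stmt10 {N d : ℕ} (hN : 1 ≤ N)
    (U : Fin N → Matrix.unitaryGroup (Fin d) ℂ)
    (K : Fin N → Fin N → ℝ) (hK : ∀ i j, K i j = K j i)
    (hKnonneg : ∀ i j, 0 ≤ K i j)
    (Gr : SimpleGraph (Fin N))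
    (hGr : ∀ i j, Gr.Adj i j ↔ i ≠ j ∧ 0 < K i j)
    (hconn : Gr.Connected)
    (L : Matrix (Fin N × Fin d) (Fin N × Fin d) ℂ)
    (hL : L = Matrix.of fun p q : Fin N × Fin d =>
      if p.1 = q.1 then
        (if p.2 = q.2 then ((∑ k ∈ Finset.univ.erase p.1, K p.1 k : ℝ) : ℂ) else 0)
      else
        (-(K p.1 q.1 : ℝ) : ℂ) *
          ((U p.1 : Matrix (Fin d) (Fin d) ℂ) * (U q.1 : Matrix (Fin d) (Fin d) ℂ)ᴴ) p.2 q.2) :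
    (∀ v : Fin N × Fin d → ℂ,
      L.mulVec v = 0 ↔ ∃ w : Fin d → ℂ,
        v = fun p : Fin N × Fin d => (U p.1 : Matrix (Fin d) (Fin d) ℂ).mulVec w p.2) ∧
    Module.finrank ℂ (LinearMap.ker L.mulVecLin) = d := by
  have hLv := hLv_aux U K L hL
  have hUsU : ∀ i, ((U i : Matrix (Fin d) (Fin d) ℂ))ᴴ * (U i) = 1 :=
    fun i => UnitaryGroup.star_mul_self (U i)
  have hUUs : ∀ i, ((U i : Matrix (Fin d) (Fin d) ℂ)) * (U i : Matrix (Fin d) (Fin d) ℂ)ᴴ = 1 :=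
    fun i => (Unitary.mem_iff.mp (U i).2).2
  -- main kernel characterization
  have hmain : ∀ v : Fin N × Fin d → ℂ,
      L.mulVec v = 0 ↔ ∃ w : Fin d → ℂ,
        v = fun p : Fin N × Fin d => (U p.1 : Matrix (Fin d) (Fin d) ℂ).mulVec w p.2 := by
    intro v
    constructor
    · intro hv
      classical
      set y : Fin N → Fin d → ℂ := fun i b => v (i, b) with hy
      set x : Fin N → Fin d → ℂ :=
        fun i => ((U i : Matrix (Fin d) (Fin d) ℂ)ᴴ).mulVec (y i) with hx
      have hvy : ∀ i, y i = (U i : Matrix (Fin d) (Fin d) ℂ).mulVec (x i) := by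
        intro i
        rw [hx, Matrix.mulVec_mulVec, hUUs i, Matrix.one_mulVec]
      have heq : ∀ i, (∑ j ∈ Finset.univ.erase i, (K i j : ℂ)) • y i
          = ∑ j ∈ Finset.univ.erase i, (K i j : ℂ) •
              ((U i : Matrix (Fin d) (Fin d) ℂ) * (U j : Matrix (Fin d) (Fin d) ℂ)ᴴ).mulVec (y j) := by
        intro i
        funext a
        have h0 : L.mulVec v (i, a) = 0 := congrFun hv (i, a)
        rw [hLv v i a, sub_eq_zero] at h0
        simp only [Pi.smul_apply, smul_eq_mul, Finset.sum_apply]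
        exact h0
      have heq2 : ∀ i, (∑ j ∈ Finset.univ.erase i, (K i j : ℂ)) • x i
          = ∑ j ∈ Finset.univ.erase i, (K i j : ℂ) • x j := by
        intro i
        have h := congrArg ((U i : Matrix (Fin d) (Fin d) ℂ)ᴴ).mulVecLin (heq i)
        simp only [_root_.map_smul, map_sum, Matrix.mulVecLin_apply,
          Matrix.mulVec_smul] at h
        have hterm : ∀ j, ((U i : Matrix (Fin d) (Fin d) ℂ)ᴴ).mulVec
            (((U i : Matrix (Fin d) (Fin d) ℂ) * (U j : Matrix (Fin d) (Fin d) ℂ)ᴴ).mulVec (y j))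
            = x j := by
          intro j
          rw [Matrix.mulVec_mulVec, ← mul_assoc, hUsU i, one_mul, hx]
        simp only [hterm] at h
        exact h
      have heq3 : ∀ i a, ∑ j ∈ Finset.univ.erase i, (K i j : ℂ) * (x i a - x j a) = 0 := by
        intro i a
        have h := congrFun (heq2 i) a
        simp only [Pi.smul_apply, smul_eq_mul, Finset.sum_apply] at h
        calc ∑ j ∈ Finset.univ.erase i, (K i j : ℂ) * (x i a - x j a)
            = (∑ j ∈ Finset.univ.erase i, (K i j : ℂ)) * x i a
              - ∑ j ∈ Finset.univ.erase i, (K i j : ℂ) * x j a := by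
              rw [Finset.sum_mul, ← Finset.sum_sub_distrib]
              exact Finset.sum_congr rfl fun j _ => by ring
          _ = 0 := by rw [h, sub_self]
      have hT1 : (∑ i, ∑ j ∈ Finset.univ.erase i, ∑ a,
          (K i j : ℂ) * (starRingEnd ℂ) (x i a) * (x i a - x j a)) = 0 := by
        refine Finset.sum_eq_zero fun i _ => ?_
        rw [Finset.sum_comm]
        refine Finset.sum_eq_zero fun a _ => ?_
        calc ∑ j ∈ Finset.univ.erase i, (K i j : ℂ) * (starRingEnd ℂ) (x i a) * (x i a - x j a)
            = (starRingEnd ℂ) (x i a)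
              * ∑ j ∈ Finset.univ.erase i, (K i j : ℂ) * (x i a - x j a) := by
              rw [Finset.mul_sum]
              exact Finset.sum_congr rfl fun j _ => by ring
          _ = 0 := by rw [heq3 i a, mul_zero]
      have hT2 : (∑ i, ∑ j ∈ Finset.univ.erase i, ∑ a,
          (K i j : ℂ) * (starRingEnd ℂ) (x j a) * (x j a - x i a)) = 0 := by
        rw [swapsum (fun i j => ∑ a, (K i j : ℂ) * (starRingEnd ℂ) (x j a) * (x j a - x i a))]
        rw [← hT1]
        refine Finset.sum_congr rfl fun i _ => Finset.sum_congr rfl fun j _ =>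
          Finset.sum_congr rfl fun a _ => by rw [hK j i]
      have hA : (∑ i, ∑ j ∈ Finset.univ.erase i, (K i j : ℂ) *
          ∑ a, (starRingEnd ℂ) (x i a - x j a) * (x i a - x j a)) = 0 := by
        have key : (∑ i, ∑ j ∈ Finset.univ.erase i, (K i j : ℂ) *
            ∑ a, (starRingEnd ℂ) (x i a - x j a) * (x i a - x j a))
            = (∑ i, ∑ j ∈ Finset.univ.erase i, ∑ a,
                (K i j : ℂ) * (starRingEnd ℂ) (x i a) * (x i a - x j a))
              + (∑ i, ∑ j ∈ Finset.univ.erase i, ∑ a,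
                (K i j : ℂ) * (starRingEnd ℂ) (x j a) * (x j a - x i a)) := by
          rw [← Finset.sum_add_distrib]
          refine Finset.sum_congr rfl fun i _ => ?_
          rw [← Finset.sum_add_distrib]
          refine Finset.sum_congr rfl fun j _ => ?_
          rw [Finset.mul_sum, ← Finset.sum_add_distrib]
          refine Finset.sum_congr rfl fun a _ => ?_
          simp only [map_sub]
          ring
        rw [key, hT1, hT2, add_zero]
      have hreal : (∑ i, ∑ j ∈ Finset.univ.erase i,
          K i j * ∑ a, Complex.normSq (x i a - x j a)) = 0 := by
        have hc : ((∑ i, ∑ j ∈ Finset.univ.erase i,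
            K i j * ∑ a, Complex.normSq (x i a - x j a) : ℝ) : ℂ) = 0 := by
          rw [← hA, Complex.ofReal_sum]
          refine Finset.sum_congr rfl fun i _ => ?_
          rw [Complex.ofReal_sum]
          refine Finset.sum_congr rfl fun j _ => ?_
          rw [Complex.ofReal_mul, Complex.ofReal_sum]
          congr 1
          exact Finset.sum_congr rfl fun a _ => Complex.normSq_eq_conj_mul_self
        exact_mod_cast hc
      have hterm0 : ∀ i, ∀ j ∈ Finset.univ.erase i,
          K i j * ∑ a, Complex.normSq (x i a - x j a) = 0 := by
        have hnn : ∀ i, ∀ j ∈ Finset.univ.erase i,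
            0 ≤ K i j * ∑ a, Complex.normSq (x i a - x j a) := fun i j _ =>
          mul_nonneg (hKnonneg i j) (Finset.sum_nonneg fun a _ => Complex.normSq_nonneg _)
        have houter := (Finset.sum_eq_zero_iff_of_nonneg
          (fun i _ => Finset.sum_nonneg (hnn i))).mp hreal
        intro i j hj
        exact (Finset.sum_eq_zero_iff_of_nonneg (hnn i)).mp
          (houter i (Finset.mem_univ i)) j hj
      have hadj : ∀ i j, Gr.Adj i j → x i = x j := by
        intro i j hij
        obtain ⟨hne, hpos⟩ := (hGr i j).mp hij
        have hj : j ∈ Finset.univ.erase i :=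
          Finset.mem_erase.mpr ⟨hne.symm, Finset.mem_univ j⟩
        have h0 := hterm0 i j hj
        have hS : ∑ a, Complex.normSq (x i a - x j a) = 0 := by
          rcases mul_eq_zero.mp h0 with h | h
          · exact absurd h (ne_of_gt hpos)
          · exact h
        funext a
        have := (Finset.sum_eq_zero_iff_of_nonneg
          (fun a _ => Complex.normSq_nonneg (x i a - x j a))).mp hS a (Finset.mem_univ a)
        exact sub_eq_zero.mp (Complex.normSq_eq_zero.mp this)
      have hconst : ∀ i j : Fin N, x i = x j := by
        intro i j
        refine (hconn i j).elim fun p => ?_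
        induction p with
        | nil => rfl
        | cons h q ih => exact (hadj _ _ h).trans ih
      refine ⟨x ⟨0, hN⟩, ?_⟩
      funext p
      obtain ⟨i, a⟩ := p
      show v (i, a) = (U i : Matrix (Fin d) (Fin d) ℂ).mulVec (x ⟨0, hN⟩) a
      rw [← hconst i ⟨0, hN⟩]
      exact congrFun (hvy i) a
    · rintro ⟨w, rfl⟩
      funext p
      obtain ⟨i, a⟩ := p
      rw [hLv]
      have hterm : ∀ j, ((U i : Matrix (Fin d) (Fin d) ℂ) * (U j : Matrix (Fin d) (Fin d) ℂ)ᴴ).mulVec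
          (fun b => (U j : Matrix (Fin d) (Fin d) ℂ).mulVec w b) a
          = (U i : Matrix (Fin d) (Fin d) ℂ).mulVec w a := by
        intro j
        have : (fun b => (U j : Matrix (Fin d) (Fin d) ℂ).mulVec w b)
            = (U j : Matrix (Fin d) (Fin d) ℂ).mulVec w := rfl
        rw [this, Matrix.mulVec_mulVec, mul_assoc, hUsU j, mul_one]
      simp only [hterm]
      rw [← Finset.sum_mul]
      simp
  refine ⟨hmain, ?_⟩
  -- rank part
  set Φ : (Fin d → ℂ) →ₗ[ℂ] (Fin N × Fin d → ℂ) :=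
    { toFun := fun w => fun p => (U p.1 : Matrix (Fin d) (Fin d) ℂ).mulVec w p.2
      map_add' := by intro w w'; funext p; simp [Matrix.mulVec_add]
      map_smul' := by intro c w; funext p; simp [Matrix.mulVec_smul] } with hΦ
  have hker : LinearMap.ker L.mulVecLin = LinearMap.range Φ := by
    ext v
    rw [LinearMap.mem_ker, LinearMap.mem_range]
    rw [Matrix.mulVecLin_apply, hmain v]
    constructor
    · rintro ⟨w, rfl⟩; exact ⟨w, rfl⟩
    · rintro ⟨w, rfl⟩; exact ⟨w, rfl⟩
  rw [hker]
  have hinj : Function.Injective Φ := by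
    rw [← LinearMap.ker_eq_bot]
    ext w
    simp only [LinearMap.mem_ker, Submodule.mem_bot]
    constructor
    · intro hw
      have i0 : Fin N := ⟨0, hN⟩
      have h1 : (U i0 : Matrix (Fin d) (Fin d) ℂ).mulVec w = 0 := by
        funext a
        exact congrFun hw (i0, a)
      have := congrArg ((U i0 : Matrix (Fin d) (Fin d) ℂ)ᴴ.mulVec) h1
      rwa [Matrix.mulVec_mulVec, hUsU i0, Matrix.one_mulVec, Matrix.mulVec_zero] at this
    · rintro rfl; simp [hΦ]; rfl
  rw [LinearMap.finrank_range_of_inj hinj]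
  simp [Module.finrank_pi]
end

section
/- For every real k, the normalization constant of the isotropic Langevin distribution on SO(3) satisfies c_3(k) = (1/2π) ∫_0^{2π} (1 − cos φ) exp(k(1 + 2 cos φ)) dφ = e^k ( Σ_{n=0}^{∞} k^{2n}/(n!)² − Σ_{n=0}^{∞} k^{2n+1}/(n!(n+1)!) ), i.e. c_3(k) = e^k (I_0(2k) − I_1(2k)) with the modified Bessel functions given by their power series. -/
/-! Expanding `exp (2k cos φ)` in its power series and integrating termwise reduces everything to
the Wallis integrals `∫₀^{2π} cos^m φ dφ`, which vanish for odd `m` and equal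
`2π (2n)! / (4ⁿ (n!)²)` for `m = 2n`. Hence `(1/2π) ∫₀^{2π} exp (2k cos φ) dφ = I₀(2k)` and
`(1/2π) ∫₀^{2π} cos φ exp (2k cos φ) dφ = I₁(2k)`, while the integrand of `c₃(k)` is
`e^k (1 - cos φ) exp (2k cos φ)`. -/

open Real intervalIntegral

section

-- Kept local: with `Nat` open, `φ` in the final statement would parse as the totient.
open Nat

theorem hasSum_intervalIntegral_mul_exp {f g : ℝ → ℝ} {a b C B : ℝ}
    (hf : Continuous f) (hg : Continuous g) (hfC : ∀ x, |f x| ≤ C) (hgB : ∀ x, |g x| ≤ B) :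
    HasSum (fun m : ℕ => ∫ x in a..b, f x * (g x ^ m / m !)) (∫ x in a..b, f x * exp (g x)) := by
  have hC : 0 ≤ C := (abs_nonneg _).trans (hfC 0)
  refine hasSum_integral_of_dominated_convergence (fun m _ => C * (B ^ m / m !))
    (fun m => (by fun_prop : Continuous _).aestronglyMeasurable) ?_
    (.of_forall fun _ _ => (summable_pow_div_factorial B).mul_left C) intervalIntegrable_const
    (.of_forall fun x _ => ?_)
  · refine fun m => .of_forall fun x _ => ?_
    rw [Real.norm_eq_abs, abs_mul, abs_div, abs_pow, Nat.abs_cast]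
    gcongr
    exacts [hfC x, hgB x]
  · rw [exp_eq_exp_ℝ]
    exact (NormedSpace.expSeries_div_hasSum_exp (g x)).mul_left (f x)

theorem integral_cos_pow_add_two_over_two_pi (m : ℕ) :
    ∫ x in 0..2 * π, cos x ^ (m + 2) = (m + 1) / (m + 2) * ∫ x in 0..2 * π, cos x ^ m := by
  simp [integral_cos_pow]

theorem integral_cos_pow_odd_over_two_pi (n : ℕ) : ∫ x in 0..2 * π, cos x ^ (2 * n + 1) = 0 := by
  induction n with
  | zero => simp
  | succ n ih => rw [show 2 * (n + 1) + 1 = 2 * n + 1 + 2 by ring,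
      integral_cos_pow_add_two_over_two_pi, ih, mul_zero]

theorem integral_cos_pow_even_over_two_pi (n : ℕ) :
    ∫ x in 0..2 * π, cos x ^ (2 * n) = 2 * π * (2 * n)! / (4 ^ n * (n ! : ℝ) ^ 2) := by
  induction n with
  | zero => simp
  | succ n ih =>
    rw [show 2 * (n + 1) = 2 * n + 2 by ring, integral_cos_pow_add_two_over_two_pi, ih,
      factorial_succ (2 * n + 1), factorial_succ (2 * n), factorial_succ n]
    push_cast
    field_simp
    ring

theorem hasSum_integral_cos_pow_mul_exp (j : ℕ) (c : ℝ) :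
    HasSum (fun m : ℕ => c ^ m / m ! * ∫ x in 0..2 * π, cos x ^ (m + j))
      (∫ x in 0..2 * π, cos x ^ j * exp (c * cos x)) := by
  convert hasSum_intervalIntegral_mul_exp (f := fun x => cos x ^ j) (g := fun x => c * cos x)
    (by fun_prop) (by fun_prop)
    (fun x => by simpa [abs_pow] using pow_le_one₀ (abs_nonneg _) (abs_cos_le_one x))
    (fun x => by simpa [abs_mul] using mul_le_of_le_one_right (abs_nonneg c) (abs_cos_le_one x))
    using 1
  funext m
  rw [← integral_const_mul]
  congr 1
  funext x
  ring

theorem hasSum_integral_exp_two_mul_cos (k : ℝ) :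
    HasSum (fun n : ℕ => k ^ (2 * n) / (n ! : ℝ) ^ 2)
      ((2 * π)⁻¹ * ∫ x in 0..2 * π, exp (2 * k * cos x)) := by
  have h := (hasSum_integral_cos_pow_mul_exp 0 (2 * k)).mul_left (2 * π)⁻¹
  rw [← (mul_right_injective₀ two_ne_zero).hasSum_iff] at h
  · have hterm (n : ℕ) : (2 * π)⁻¹ * ((2 * k) ^ (2 * n) / (2 * n)! *
        ∫ x in 0..2 * π, cos x ^ (2 * n + 0)) = k ^ (2 * n) / (n ! : ℝ) ^ 2 := by
      rw [add_zero, integral_cos_pow_even_over_two_pi, mul_pow, pow_mul]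
      field_simp
      norm_num [mul_comm]
    simpa only [Function.comp_def, hterm, pow_zero, one_mul] using h
  · intro m hm
    obtain ⟨n, rfl | rfl⟩ := m.even_or_odd'
    · exact absurd ⟨n, rfl⟩ hm
    · rw [add_zero, integral_cos_pow_odd_over_two_pi, mul_zero, mul_zero]

theorem hasSum_integral_cos_mul_exp_two_mul_cos (k : ℝ) :
    HasSum (fun n : ℕ => k ^ (2 * n + 1) / (n ! * (n + 1)! : ℝ))
      ((2 * π)⁻¹ * ∫ x in 0..2 * π, cos x * exp (2 * k * cos x)) := by
  have h := (hasSum_integral_cos_pow_mul_exp 1 (2 * k)).mul_left (2 * π)⁻¹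
  rw [← (add_left_injective 1 |>.comp (mul_right_injective₀ two_ne_zero)).hasSum_iff] at h
  · have hterm (n : ℕ) : (2 * π)⁻¹ * ((2 * k) ^ (2 * n + 1) / (2 * n + 1)! *
        ∫ x in 0..2 * π, cos x ^ (2 * n + 1 + 1)) = k ^ (2 * n + 1) / (n ! * (n + 1)! : ℝ) := by
      rw [show 2 * n + 1 + 1 = 2 * (n + 1) by ring, integral_cos_pow_even_over_two_pi,
        show 2 * (n + 1) = 2 * n + 1 + 1 by ring, factorial_succ (2 * n + 1), factorial_succ n,
        mul_pow, pow_succ, pow_mul]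
      push_cast
      field_simp
      norm_num
      ring
    simpa only [Function.comp_def, hterm, pow_one] using h
  · intro m hm
    obtain ⟨n, rfl | rfl⟩ := m.even_or_odd'
    · rw [integral_cos_pow_odd_over_two_pi, mul_zero, mul_zero]
    · exact absurd ⟨n, rfl⟩ hm

end

/-- The normalization constant of the isotropic Langevin distribution on SO(3)
satisfies `c₃(k) = (1/2π) ∫_0^{2π} (1 - cos φ) exp(k(1 + 2cos φ)) dφ
= e^k (I₀(2k) - I₁(2k))` with the modified Bessel functions given by their power series. -/
theorem stmt17 (k : ℝ) :
    (1 / (2 * Real.pi)) *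
        ∫ φ in (0:ℝ)..(2 * Real.pi),
          (1 - Real.cos φ) * Real.exp (k * (1 + 2 * Real.cos φ)) =
      Real.exp k *
        ((∑' n : ℕ, k ^ (2 * n) / ((Nat.factorial n : ℝ)) ^ 2) -
          ∑' n : ℕ, k ^ (2 * n + 1) /
            ((Nat.factorial n : ℝ) * (Nat.factorial (n + 1) : ℝ))) := by
  have hsplit (φ : ℝ) : (1 - cos φ) * exp (k * (1 + 2 * cos φ)) =
      exp k * (exp (2 * k * cos φ) - cos φ * exp (2 * k * cos φ)) := by
    rw [show k * (1 + 2 * cos φ) = k + 2 * k * cos φ by ring, exp_add]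
    ring
  simp_rw [hsplit]
  rw [integral_const_mul, integral_sub (by apply Continuous.intervalIntegrable; fun_prop)
      (by apply Continuous.intervalIntegrable; fun_prop),
    (hasSum_integral_exp_two_mul_cos k).tsum_eq, (hasSum_integral_cos_mul_exp_two_mul_cos k).tsum_eq]
  ring
end
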